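/- arXiv:2510.01895 — 5 statements merged into one kernel-verified Lean document; each statement's English description precedes it below -/
import Mathlib

section
/- Let R = k[x_{ij}] with the column-permutation action of S_d, J_d the ideal generated by alternating polynomials, and ε the sign character. For every ℓ ≥ 1, the image of the multiplication map from the ℓ-fold tensor power of the space of alternating polynomials to R, i.e., the k-span of products f_1⋯f_ℓ of alternating polynomials together with its R^{S_d}-module structure, equals both the set of elements of J_d^ℓ on which S_d acts by ε^ℓ and the set of elements of J_d^{ℓ−1} on which S_d acts by ε^ℓ. -/
open MvPolynomial

namespace Stmt3

variable {k : Type*} [Field k] [CharZero k] (n d : ℕ)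

/-- The action of a permutation on `k[x_{ij}]` by permuting the columns. -/
noncomputable def colAct (σ : Equiv.Perm (Fin d)) :
    MvPolynomial (Fin n × Fin d) k →ₐ[k] MvPolynomial (Fin n × Fin d) k :=
  rename (fun p : Fin n × Fin d => (p.1, σ p.2))

/-- The set of alternating polynomials. -/
def Alternating : Set (MvPolynomial (Fin n × Fin d) k) :=
  {f | ∀ σ : Equiv.Perm (Fin d), colAct n d σ f = (Equiv.Perm.sign σ : ℤ) • f}

/-- The subalgebra `R^{S_d}` of multisymmetric polynomials. -/
noncomputable def invariants : Subalgebra k (MvPolynomial (Fin n × Fin d) k) where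
  carrier := {f | ∀ σ : Equiv.Perm (Fin d), colAct n d σ f = f}
  mul_mem' := by
    intro a b ha hb σ
    rw [map_mul, ha σ, hb σ]
  add_mem' := by
    intro a b ha hb σ
    rw [map_add, ha σ, hb σ]
  algebraMap_mem' := by
    intro r σ
    simp [colAct, algebraMap_eq]

/-- The ideal `J_d` generated by the alternating polynomials. -/
noncomputable def Jd : Ideal (MvPolynomial (Fin n × Fin d) k) :=
  Ideal.span (Alternating n d)

/-!
Let `P_ℓ` be the `R^{S_d}`-span of products of `ℓ` alternating polynomials. These products
generate `J_d^ℓ` as an ideal and lie in the `ε^ℓ`-isotypic component `R_{ε^ℓ}`, so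
`P_ℓ ⊆ J_d^ℓ ∩ R_{ε^ℓ} ⊆ J_d^{ℓ-1} ∩ R_{ε^ℓ}`. Conversely, write `f ∈ J_d^{ℓ-1} ∩ R_{ε^ℓ}` as
`∑ rᵢ gᵢ` with each `gᵢ` a product of `ℓ - 1` alternating polynomials. In characteristic zero the
Reynolds operator for `ε^ℓ` fixes `f`, and since `gᵢ` transforms by `ε^{ℓ-1}` it sends `rᵢ gᵢ` to
`(Reynolds_ε rᵢ) gᵢ`, a product of `ℓ` alternating polynomials.
-/

open scoped Pointwise

local notation "𝓡" => MvPolynomial (Fin n × Fin d) k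

section

omit [CharZero k]

lemma units_pow_mul_self (u : ℤˣ) (a : ℕ) : (u : ℤ) ^ a * (u : ℤ) ^ a = 1 := by
  rw [← mul_pow, Int.units_coe_mul_self, one_pow]

lemma colAct_colAct (σ τ : Equiv.Perm (Fin d)) (f : 𝓡) :
    colAct n d σ (colAct n d τ f) = colAct n d (σ * τ) f := by
  simp only [colAct]
  rw [rename_rename]
  rfl

/-- The `ε^ℓ`-isotypic component `(R ⊗ ε^ℓ)^{S_d}`, a module over `R^{S_d}`. -/
noncomputable def signIsotypic (ℓ : ℕ) : Submodule (invariants n d (k := k)) 𝓡 where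
  carrier := {f | ∀ σ : Equiv.Perm (Fin d), colAct n d σ f = ((Equiv.Perm.sign σ : ℤ) ^ ℓ) • f}
  add_mem' {a b} ha hb σ := by rw [map_add, ha σ, hb σ, smul_add]
  zero_mem' σ := by rw [map_zero, smul_zero]
  smul_mem' c f hf σ := by
    change colAct n d σ ((c : 𝓡) * f) = ((Equiv.Perm.sign σ : ℤ) ^ ℓ) • ((c : 𝓡) * f)
    rw [map_mul, c.2 σ, hf σ, mul_smul_comm]

lemma mem_signIsotypic {ℓ : ℕ} {f : 𝓡} :
    f ∈ signIsotypic n d ℓ ↔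
      ∀ σ : Equiv.Perm (Fin d), colAct n d σ f = ((Equiv.Perm.sign σ : ℤ) ^ ℓ) • f :=
  Iff.rfl

lemma mem_signIsotypic_one {f : 𝓡} : f ∈ signIsotypic n d 1 ↔ f ∈ Alternating n d := by
  simp only [mem_signIsotypic, pow_one, Alternating, Set.mem_ofPred_eq]

def alternatingProducts (m : ℕ) : Set 𝓡 :=
  {x | ∃ fs : Fin m → 𝓡, (∀ t, fs t ∈ Alternating n d) ∧ x = ∏ t, fs t}

lemma alternatingProducts_zero : alternatingProducts n d (k := k) 0 = {1} := by
  ext x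
  simp [alternatingProducts]

lemma alternatingProducts_succ (m : ℕ) :
    alternatingProducts n d (k := k) (m + 1) =
      Alternating n d * alternatingProducts n d (k := k) m := by
  ext x
  constructor
  · rintro ⟨fs, hfs, rfl⟩
    rw [Fin.prod_univ_succ]
    exact Set.mul_mem_mul (hfs 0) ⟨fun i => fs i.succ, fun i => hfs i.succ, rfl⟩
  · rintro ⟨a, ha, _, ⟨fs, hfs, rfl⟩, rfl⟩
    refine ⟨Fin.cons a fs, Fin.cases ha hfs, ?_⟩
    rw [Fin.prod_cons]

lemma alternatingProducts_subset_signIsotypic (m : ℕ) :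
    alternatingProducts n d (k := k) m ⊆ (signIsotypic n d (k := k) m : Set 𝓡) := by
  induction m with
  | zero =>
    rw [alternatingProducts_zero, Set.singleton_subset_iff]
    exact fun σ => by rw [map_one, pow_zero, one_smul]
  | succ m ih =>
    rw [alternatingProducts_succ]
    rintro _ ⟨a, ha, b, hb, rfl⟩ σ
    rw [map_mul, ha σ, ih hb σ, smul_mul_smul_comm, pow_succ']

lemma Jd_pow_eq_span (m : ℕ) : Jd n d (k := k) ^ m = Ideal.span (alternatingProducts n d m) := by
  induction m with
  | zero => rw [pow_zero, alternatingProducts_zero, Ideal.span_singleton_one, Ideal.one_eq_top]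
  | succ m ih => rw [pow_succ', ih, Jd, Ideal.span_mul_span', alternatingProducts_succ]

lemma span_alternatingProducts_le (m : ℕ) :
    Submodule.span (invariants n d) (alternatingProducts n d m) ≤
      (Jd n d (k := k) ^ m).restrictScalars (invariants n d) ⊓ signIsotypic n d m := by
  rw [Submodule.span_le]
  intro x hx
  refine ⟨?_, alternatingProducts_subset_signIsotypic n d m hx⟩
  change x ∈ Jd n d ^ m
  rw [Jd_pow_eq_span]
  exact Ideal.subset_span hx

/-- The Reynolds operator of `ε^ℓ`, a projection onto `signIsotypic ℓ`. -/
noncomputable def signAverage (ℓ : ℕ) : 𝓡 →ₗ[k] 𝓡 :=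
  (d.factorial : k)⁻¹ •
    ∑ σ : Equiv.Perm (Fin d), ((Equiv.Perm.sign σ : ℤ) ^ ℓ) • (colAct n d σ).toLinearMap

lemma signAverage_apply (ℓ : ℕ) (f : 𝓡) :
    signAverage n d ℓ f =
      (d.factorial : k)⁻¹ •
        ∑ σ : Equiv.Perm (Fin d), ((Equiv.Perm.sign σ : ℤ) ^ ℓ) • colAct n d σ f := by
  simp only [signAverage, LinearMap.smul_apply, LinearMap.sum_apply, AlgHom.toLinearMap_apply]

lemma signAverage_mem_signIsotypic (ℓ : ℕ) (f : 𝓡) :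
    signAverage n d ℓ f ∈ signIsotypic n d ℓ := by
  intro τ
  have hsign : ∀ σ : Equiv.Perm (Fin d), ((Equiv.Perm.sign σ : ℤ) ^ ℓ) =
      (Equiv.Perm.sign τ : ℤ) ^ ℓ * (Equiv.Perm.sign (τ * σ) : ℤ) ^ ℓ := fun σ => by
    rw [Equiv.Perm.sign_mul, Units.val_mul, mul_pow, ← mul_assoc, units_pow_mul_self, one_mul]
  have hsum : ∑ σ : Equiv.Perm (Fin d), ((Equiv.Perm.sign σ : ℤ) ^ ℓ) • colAct n d (τ * σ) f =
      (Equiv.Perm.sign τ : ℤ) ^ ℓ •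
        ∑ σ : Equiv.Perm (Fin d), ((Equiv.Perm.sign σ : ℤ) ^ ℓ) • colAct n d σ f := by
    rw [← Equiv.sum_comp (Equiv.mulLeft τ)
      fun σ => ((Equiv.Perm.sign σ : ℤ) ^ ℓ) • colAct n d σ f, Finset.smul_sum]
    exact Finset.sum_congr rfl fun σ _ => by rw [hsign, mul_smul]; rfl
  simp only [signAverage_apply, map_smul, map_sum, map_zsmul, colAct_colAct]
  rw [hsum, smul_comm]

lemma signAverage_mul_of_mem {ℓ m : ℕ} (r : 𝓡) {g : 𝓡} (hg : g ∈ signIsotypic n d m) :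
    signAverage n d (m + ℓ) (r * g) = signAverage n d ℓ r * g := by
  rw [signAverage_apply, signAverage_apply, smul_mul_assoc, Finset.sum_mul]
  refine congrArg _ (Finset.sum_congr rfl fun σ _ => ?_)
  rw [map_mul, hg σ, mul_smul_comm, smul_smul, smul_mul_assoc, pow_add, mul_right_comm,
    units_pow_mul_self, one_mul]

lemma signAverage_mem_span_of_mem_pow {m : ℕ} {f : 𝓡} (hf : f ∈ Jd n d ^ m) :
    signAverage n d (m + 1) f ∈
      Submodule.span (invariants n d (k := k)) (alternatingProducts n d (m + 1)) := by
  rw [Jd_pow_eq_span] at hf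
  obtain ⟨N, c, g, rfl⟩ := Submodule.mem_span_set'.mp hf
  rw [map_sum]
  refine Submodule.sum_mem _ fun i _ => Submodule.subset_span ?_
  rw [smul_eq_mul,
    signAverage_mul_of_mem n d _ (alternatingProducts_subset_signIsotypic n d m (g i).2),
    alternatingProducts_succ]
  exact Set.mul_mem_mul
    ((mem_signIsotypic_one n d).mp (signAverage_mem_signIsotypic n d 1 _)) (g i).2

end

lemma signAverage_of_mem {ℓ : ℕ} {f : 𝓡} (hf : f ∈ signIsotypic n d ℓ) :
    signAverage n d ℓ f = f := by
  have hterm : ∀ σ : Equiv.Perm (Fin d), ((Equiv.Perm.sign σ : ℤ) ^ ℓ) • colAct n d σ f = f :=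
    fun σ => by rw [hf σ, smul_smul, units_pow_mul_self, one_smul]
  rw [signAverage_apply, Finset.sum_congr rfl fun σ _ => hterm σ, Finset.sum_const,
    Finset.card_univ, Fintype.card_perm, Fintype.card_fin, ← Nat.cast_smul_eq_nsmul k, smul_smul,
    inv_mul_cancel₀ (Nat.cast_ne_zero.mpr d.factorial_ne_zero), one_smul]

lemma mem_span_alternatingProducts_of_mem_pow {m : ℕ} {f : 𝓡} (hf : f ∈ Jd n d ^ m)
    (hiso : f ∈ signIsotypic n d (m + 1)) :
    f ∈ Submodule.span (invariants n d (k := k)) (alternatingProducts n d (m + 1)) :=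
  signAverage_of_mem n d hiso ▸ signAverage_mem_span_of_mem_pow n d hf

/-- For every `ℓ ≥ 1`, the image of the `ℓ`-fold multiplication map on
alternating polynomials — i.e. the `R^{S_d}`-submodule spanned by products `f_1 ⋯ f_ℓ` of
alternating polynomials — equals both the set of elements of `J_d^ℓ` on which `S_d` acts
through `ε^ℓ` and the set of elements of `J_d^{ℓ-1}` on which `S_d` acts through `ε^ℓ`. -/
theorem image_of_multiplication_map (ℓ : ℕ) (hℓ : 1 ≤ ℓ) :
    ((Submodule.span (invariants n d (k := k))
        {x : MvPolynomial (Fin n × Fin d) k |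
          ∃ fs : Fin ℓ → MvPolynomial (Fin n × Fin d) k,
            (∀ t, fs t ∈ Alternating n d) ∧ x = ∏ t, fs t} :
      Submodule (invariants n d (k := k)) (MvPolynomial (Fin n × Fin d) k)) : Set _) =
      {f | f ∈ (Jd n d (k := k)) ^ ℓ ∧
        ∀ σ : Equiv.Perm (Fin d), colAct n d σ f = ((Equiv.Perm.sign σ : ℤ) ^ ℓ) • f} ∧
    ((Submodule.span (invariants n d (k := k))
        {x : MvPolynomial (Fin n × Fin d) k |
          ∃ fs : Fin ℓ → MvPolynomial (Fin n × Fin d) k,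
            (∀ t, fs t ∈ Alternating n d) ∧ x = ∏ t, fs t} :
      Submodule (invariants n d (k := k)) (MvPolynomial (Fin n × Fin d) k)) : Set _) =
      {f | f ∈ (Jd n d (k := k)) ^ (ℓ - 1) ∧
        ∀ σ : Equiv.Perm (Fin d), colAct n d σ f = ((Equiv.Perm.sign σ : ℤ) ^ ℓ) • f} := by
  obtain ⟨m, rfl⟩ := Nat.exists_eq_add_of_le' hℓ
  have hspan := span_alternatingProducts_le n d (k := k) (m + 1)
  have hpow : Jd n d (k := k) ^ (m + 1) ≤ Jd n d ^ m := Ideal.pow_le_pow_right m.le_succ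
  refine ⟨Set.ext fun f => ⟨fun hf => hspan hf, fun hf => ?_⟩,
    Set.ext fun f => ⟨fun hf => ⟨hpow (hspan hf).1, (hspan hf).2⟩, fun hf => ?_⟩⟩
  · exact mem_span_alternatingProducts_of_mem_pow n d (hpow hf.1) hf.2
  · exact mem_span_alternatingProducts_of_mem_pow n d hf.1 hf.2

end Stmt3
end

section
/- For n = d = 3 (a 3×3 matrix of variables with S_3 permuting columns), the ideal J_3 generated by alternating polynomials equals the ideal I(Δ_3) of the big diagonal. -/
/-!
An alternating polynomial vanishes on `Δ_3`: the transposition of two equal columns fixes the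
point and negates the value, and `2 ≠ 0`.

Conversely write `u i = x_{i0} - x_{i1}`, `v i = x_{i0} - x_{i2}`, `w i = x_{i1} - x_{i2}`.
A polynomial vanishing where column 1 equals column 0 lies in `(u)`. Setting column 2 equal to
column 0 fixes `u`, which turns `f = u ⬝ a` into `f = u ⬝ (g v)`; setting column 2 equal to
column 1 fixes `u` and sends `v` to `u`, so the reduced matrix `c` satisfies `u ⬝ (c u) = 0`.
Since `u` is a regular sequence its syzygies are Koszul, which puts `u ⬝ (c v)` into the ideal
of `2 × 2` minors of `(u | v)`, while `u ⬝ ((g - c) v)` lies in `(u)(v)(w)`. The minors are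
alternating, and `6 u_i v_j w_l` is an alternating polynomial plus a combination of minors.
-/

open MvPolynomial Matrix

namespace AlternatingDiagonal

section Substitution

variable {σ R : Type*} [CommRing R]

theorem sub_aeval_mem_span (s : σ → MvPolynomial σ R) (f : MvPolynomial σ R) :
    f - aeval s f ∈ Ideal.span (Set.range fun v => X v - s v) := by
  induction f using MvPolynomial.induction_on with
  | C a => simp
  | add p q hp hq => simpa only [map_add, add_sub_add_comm] using Ideal.add_mem _ hp hq
  | mul_X p v hp =>
    have h : p * X v - aeval s (p * X v) = (p - aeval s p) * X v + aeval s p * (X v - s v) := by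
      rw [map_mul, aeval_X]; ring
    rw [h]
    exact Ideal.add_mem _ (Ideal.mul_mem_right _ _ hp)
      (Ideal.mul_mem_left _ _ (Ideal.subset_span ⟨v, rfl⟩))

theorem eval_aeval (q : σ → R) (s : σ → MvPolynomial σ R) (f : MvPolynomial σ R) :
    eval q (aeval s f) = eval (fun v => eval q (s v)) f := by
  rw [aeval_eq_bind₁]
  exact eval₂Hom_bind₁ _ _ _ _

theorem X_sub_X_dvd_sub_aeval_update [DecidableEq σ] (v w : σ) (f : MvPolynomial σ R) :
    X v - X w ∣ f - aeval (Function.update X w (X v)) f := by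
  rw [← Ideal.mem_span_singleton]
  refine Ideal.span_le.mpr ?_ (sub_aeval_mem_span _ f)
  rintro _ ⟨x, rfl⟩
  by_cases hx : x = w
  · subst hx
    simp only [Function.update_self, SetLike.mem_coe]
    rw [← neg_sub (X v)]
    exact neg_mem (Ideal.mem_span_singleton_self _)
  · simp [hx]

end Substitution

section Columns

variable {R ι κ : Type*} [CommRing R]

noncomputable def colDiff (a b : κ) (i : ι) : MvPolynomial (ι × κ) R := X (i, a) - X (i, b)

noncomputable def collapse [DecidableEq κ] (a b : κ) :
    MvPolynomial (ι × κ) R →ₐ[R] MvPolynomial (ι × κ) R :=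
  aeval fun v => if v.2 = b then X (v.1, a) else X v

theorem colDiff_ne_zero [Nontrivial R] {a b : κ} (hab : a ≠ b) (i : ι) :
    (colDiff a b i : MvPolynomial (ι × κ) R) ≠ 0 :=
  sub_ne_zero.mpr fun h => hab (congrArg Prod.snd (X_injective h))

variable [DecidableEq κ]

theorem sub_collapse_mem_span (a b : κ) (f : MvPolynomial (ι × κ) R) :
    f - collapse a b f ∈ Ideal.span (Set.range (colDiff a b)) := by
  refine Ideal.span_le.mpr ?_ (sub_aeval_mem_span _ f)
  rintro _ ⟨⟨i, c⟩, rfl⟩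
  by_cases hc : c = b
  · subst hc
    dsimp only [collapse]
    rw [if_pos rfl, ← neg_sub]
    exact neg_mem (Ideal.subset_span ⟨i, rfl⟩)
  · simp [hc]

theorem collapse_colDiff_of_ne {a b c d : κ} (hc : c ≠ b) (hd : d ≠ b) (i : ι) :
    collapse a b (colDiff c d i : MvPolynomial (ι × κ) R) = colDiff c d i := by
  simp [collapse, colDiff, hc, hd]

theorem collapse_colDiff_right {a b c : κ} (hc : c ≠ b) (i : ι) :
    collapse a b (colDiff c b i : MvPolynomial (ι × κ) R) = colDiff c a i := by
  simp [collapse, colDiff, hc]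

theorem collapse_eq_zero_of_forall_eval [IsDomain R] [Infinite R] {a b : κ}
    {f : MvPolynomial (ι × κ) R}
    (hf : ∀ p : ι × κ → R, (∀ i, p (i, a) = p (i, b)) → eval p f = 0) :
    collapse a b f = 0 :=
  MvPolynomial.funext fun q => by
    rw [collapse, eval_aeval, map_zero]
    exact hf _ fun i => by simp

end Columns

section Alternating

variable {R ι κ : Type*} [CommRing R] [Fintype κ] [DecidableEq κ]

def IsAlternating (g : MvPolynomial (ι × κ) R) : Prop :=
  ∀ σ : Equiv.Perm κ,
    rename (fun p : ι × κ => (p.1, σ p.2)) g = (Equiv.Perm.sign σ : ℤ) • g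

noncomputable def alternatingIdeal : Ideal (MvPolynomial (ι × κ) R) :=
  Ideal.span {g | IsAlternating g}

theorem IsAlternating.of_rename_swap {n : ℕ} {g : MvPolynomial (ι × Fin (n + 1)) R}
    (h : ∀ i : Fin n,
      rename (fun p : ι × Fin (n + 1) => (p.1, Equiv.swap i.castSucc i.succ p.2)) g = -g) :
    IsAlternating g := by
  intro σ
  have hσ :
      σ ∈ Submonoid.closure (Set.range fun i : Fin n => Equiv.swap i.castSucc i.succ) := by
    rw [Equiv.Perm.mclosure_swap_castSucc_succ]; trivial
  induction hσ using Submonoid.closure_induction with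
  | mem τ hτ =>
    obtain ⟨i, rfl⟩ := hτ
    rw [h i, Equiv.Perm.sign_swap (Fin.castSucc_lt_succ (i := i)).ne, Units.val_neg, Units.val_one,
      neg_one_zsmul]
  | one =>
    simp only [Equiv.Perm.one_apply, Equiv.Perm.sign_one, Units.val_one, one_smul]
    exact rename_id_apply g
  | mul τ τ' _ _ hτ hτ' =>
    rw [show (fun p : ι × Fin (n + 1) => (p.1, (τ * τ') p.2)) =
        (fun p => (p.1, τ p.2)) ∘ (fun p => (p.1, τ' p.2)) from rfl, ← rename_rename, hτ',
      map_zsmul, hτ, smul_smul, Equiv.Perm.sign_mul, Units.val_mul, mul_comm]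

theorem IsAlternating.eval_eq_zero [IsAddTorsionFree R] {g : MvPolynomial (ι × κ) R}
    (hg : IsAlternating g) {p : ι × κ → R} {j j' : κ} (hjj' : j ≠ j')
    (hp : ∀ i, p (i, j) = p (i, j')) : eval p g = 0 := by
  have hswap : p ∘ (fun q : ι × κ => (q.1, Equiv.swap j j' q.2)) = p := by
    funext ⟨i, c⟩
    rcases eq_or_ne c j with rfl | hcj
    · simp [hp]
    rcases eq_or_ne c j' with rfl | hcj'
    · simp [hp]
    · simp [Equiv.swap_apply_of_ne_of_ne hcj hcj']
  have h := congrArg (eval p) (hg (Equiv.swap j j'))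
  rw [eval_rename, hswap, Equiv.Perm.sign_swap hjj', Units.val_neg, Units.val_one, neg_one_zsmul,
    map_neg] at h
  exact self_eq_neg.mp h

theorem eval_eq_zero_of_mem_alternatingIdeal [IsAddTorsionFree R]
    {f : MvPolynomial (ι × κ) R} (hf : f ∈ alternatingIdeal) {p : ι × κ → R} {j j' : κ}
    (hjj' : j ≠ j') (hp : ∀ i, p (i, j) = p (i, j')) : eval p f = 0 :=
  (Ideal.span_le (I := RingHom.ker (eval p)).mpr (fun _ hg => hg.eval_eq_zero hjj' hp)) hf

end Alternating

section Koszul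

variable {A : Type*} [CommRing A]

def skew3 (b01 b02 b12 : A) : Matrix (Fin 3) (Fin 3) A :=
  !![0, b01, b02; -b01, 0, b12; -b02, -b12, 0]

def HasKoszulSyzygies (x : Fin 3 → A) : Prop :=
  ∀ a : Fin 3 → A, x ⬝ᵥ a = 0 → ∃ b01 b02 b12, a = skew3 b01 b02 b12 *ᵥ x

theorem dotProduct_skew3_mulVec (x y : Fin 3 → A) (b01 b02 b12 : A) :
    x ⬝ᵥ (skew3 b01 b02 b12 *ᵥ y) = b01 * (x 0 * y 1 - x 1 * y 0) +
      b02 * (x 0 * y 2 - x 2 * y 0) + b12 * (x 1 * y 2 - x 2 * y 1) := by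
  simp only [skew3, dotProduct, mulVec, of_apply, cons_val', cons_val_zero, cons_val_one, cons_val,
    cons_val_fin_one, Fin.sum_univ_three]
  ring

theorem skew3_mulVec_dotProduct (x y : Fin 3 → A) (b01 b02 b12 : A) :
    (skew3 b01 b02 b12 *ᵥ x) ⬝ᵥ y = -(x ⬝ᵥ (skew3 b01 b02 b12 *ᵥ y)) := by
  simp only [skew3, dotProduct, mulVec, of_apply, cons_val', cons_val_zero, cons_val_one, cons_val,
    cons_val_fin_one, Fin.sum_univ_three]
  ring

theorem dotProduct_skew3_mulVec_mem_span (x y : Fin 3 → A) (b01 b02 b12 : A) :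
    x ⬝ᵥ (skew3 b01 b02 b12 *ᵥ y) ∈
      Ideal.span (Set.range fun p : Fin 3 × Fin 3 => x p.1 * y p.2 - x p.2 * y p.1) := by
  rw [dotProduct_skew3_mulVec]
  refine Ideal.add_mem _ (Ideal.add_mem _ ?_ ?_) ?_ <;>
    exact Ideal.mul_mem_left _ _ (Ideal.subset_span ⟨(_, _), rfl⟩)

theorem HasKoszulSyzygies.dotProduct_mulVec_mem_span {x : Fin 3 → A} (hx : HasKoszulSyzygies x)
    {c : Matrix (Fin 3) (Fin 3) A} (hc : x ⬝ᵥ (c *ᵥ x) = 0) (y : Fin 3 → A) :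
    x ⬝ᵥ (c *ᵥ y) ∈
      Ideal.span (Set.range fun p : Fin 3 × Fin 3 => x p.1 * y p.2 - x p.2 * y p.1) := by
  -- `c x = B x` with `B` skew, and then every row of `c - B` is again a syzygy of `x`.
  obtain ⟨b01, b02, b12, hb⟩ := hx _ hc
  have hrow : ∀ i, ∃ e01 e02 e12, c i - skew3 b01 b02 b12 i = skew3 e01 e02 e12 *ᵥ x := by
    refine fun i => hx _ ?_
    rw [dotProduct_comm, sub_dotProduct]
    exact sub_eq_zero.mpr (congrFun hb i)
  choose e01 e02 e12 he using hrow
  have hcy : c *ᵥ y = skew3 b01 b02 b12 *ᵥ y +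
      fun i => (skew3 (e01 i) (e02 i) (e12 i) *ᵥ x) ⬝ᵥ y := by
    funext i
    simp only [Pi.add_apply, ← he i, sub_dotProduct]
    exact (add_sub_cancel _ _).symm
  rw [hcy, dotProduct_add]
  refine Ideal.add_mem _ (dotProduct_skew3_mulVec_mem_span _ _ _ _ _) ?_
  refine Ideal.sum_mem _ fun i _ => Ideal.mul_mem_left _ _ ?_
  dsimp only
  rw [skew3_mulVec_dotProduct]
  exact neg_mem (dotProduct_skew3_mulVec_mem_span _ _ _ _ _)

theorem exists_eq_mulVec_of_forall_mem_span {m n : Type*} [Fintype n] {x : n → A} {a : m → A}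
    (h : ∀ i, a i ∈ Ideal.span (Set.range x)) : ∃ g : Matrix m n A, a = g *ᵥ x := by
  choose c hc using fun i => Ideal.mem_span_range_iff_exists_fun.mp (h i)
  exact ⟨Matrix.of c, funext fun i => (hc i).symm⟩

theorem dotProduct_mulVec_mem_span_triples {m n l : Type*} [Fintype m] [Fintype n] [Fintype l]
    (x : m → A) (y : n → A) (z : l → A) {g : Matrix m n A}
    (hg : ∀ i j, g i j ∈ Ideal.span (Set.range z)) :
    x ⬝ᵥ (g *ᵥ y) ∈
      Ideal.span (Set.range fun p : m × n × l => x p.1 * y p.2.1 * z p.2.2) := by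
  simp only [dotProduct, mulVec, Finset.mul_sum]
  refine Ideal.sum_mem _ fun i _ => Ideal.sum_mem _ fun j _ => ?_
  obtain ⟨e, he⟩ := Ideal.mem_span_range_iff_exists_fun.mp (hg i j)
  rw [← he, Finset.sum_mul, Finset.mul_sum]
  refine Ideal.sum_mem _ fun k _ => ?_
  rw [show x i * (e k * z k * y j) = e k * (x i * y j * z k) by ring]
  exact Ideal.mul_mem_left _ _ (Ideal.subset_span ⟨(i, j, k), rfl⟩)

theorem dotProduct_eq_dotProduct_sub_map {F n : Type*} [Fintype n] [FunLike F A A]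
    [RingHomClass F A A] (φ : F) {x a : n → A} (hx : ∀ i, φ (x i) = x i)
    (ha : φ (x ⬝ᵥ a) = 0) : x ⬝ᵥ a = x ⬝ᵥ fun i => a i - φ (a i) := by
  have hφ : φ (x ⬝ᵥ a) = x ⬝ᵥ fun i => φ (a i) := by
    simp only [dotProduct, map_sum, map_mul, hx]
  rw [← sub_zero (x ⬝ᵥ a), ← ha, hφ, ← dotProduct_sub]
  rfl

end Koszul

section RowCollapse

variable {R ι κ : Type*} [CommRing R] [DecidableEq ι] [DecidableEq κ]

noncomputable def rowCollapse (a b : κ) (m : ι) :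
    MvPolynomial (ι × κ) R →ₐ[R] MvPolynomial (ι × κ) R :=
  aeval (Function.update X (m, b) (X (m, a)))

theorem rowCollapse_colDiff_self (a b : κ) (m : ι) :
    rowCollapse a b m (colDiff a b m : MvPolynomial (ι × κ) R) = 0 := by
  by_cases hab : a = b
  · simp [rowCollapse, colDiff, hab]
  · simp [rowCollapse, colDiff, Function.update_of_ne (show (m, a) ≠ (m, b) by simpa using hab)]

theorem rowCollapse_colDiff_of_ne (a b : κ) {i m : ι} (him : i ≠ m) :
    rowCollapse a b m (colDiff a b i : MvPolynomial (ι × κ) R) = colDiff a b i := by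
  simp [rowCollapse, colDiff, him]

theorem colDiff_dvd_sub_rowCollapse (a b : κ) (m : ι) (f : MvPolynomial (ι × κ) R) :
    colDiff a b m ∣ f - rowCollapse a b m f :=
  X_sub_X_dvd_sub_aeval_update _ _ f

variable [IsDomain R] {a b : κ}

theorem exists_eq_colDiff_mul_of_colDiff_mul_add_eq_zero (hab : a ≠ b) {m m' : ι}
    (hmm' : m ≠ m') {A B : MvPolynomial (ι × κ) R}
    (h : colDiff a b m * A + colDiff a b m' * B = 0) :
    ∃ β, A = colDiff a b m' * β ∧ B = -(colDiff a b m * β) := by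
  have hA : rowCollapse a b m' A = 0 := by
    have h' := congrArg (rowCollapse a b m') h
    rw [map_zero, map_add, map_mul, map_mul, rowCollapse_colDiff_of_ne a b hmm',
      rowCollapse_colDiff_self, zero_mul, add_zero] at h'
    exact (mul_eq_zero.mp h').resolve_left (colDiff_ne_zero hab m)
  obtain ⟨β, hβ⟩ := colDiff_dvd_sub_rowCollapse a b m' A
  rw [hA, sub_zero] at hβ
  have hB : colDiff a b m' * (colDiff a b m * β + B) = 0 := by
    rw [← h, hβ]; ring
  exact ⟨β, hβ, by
    linear_combination (mul_eq_zero.mp hB).resolve_left (colDiff_ne_zero hab m')⟩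

theorem hasKoszulSyzygies_colDiff (hab : a ≠ b) :
    HasKoszulSyzygies (colDiff a b : Fin 3 → MvPolynomial (Fin 3 × κ) R) := by
  intro x hx
  simp only [dotProduct, Fin.sum_univ_three] at hx
  have h2 := congrArg (rowCollapse a b 2) hx
  rw [map_zero, map_add, map_add, map_mul, map_mul, map_mul,
    rowCollapse_colDiff_of_ne a b (by decide : (0 : Fin 3) ≠ 2),
    rowCollapse_colDiff_of_ne a b (by decide : (1 : Fin 3) ≠ 2),
    rowCollapse_colDiff_self, zero_mul, add_zero] at h2
  obtain ⟨β, hβ0, hβ1⟩ :=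
    exists_eq_colDiff_mul_of_colDiff_mul_add_eq_zero hab (by decide : (0 : Fin 3) ≠ 1) h2
  obtain ⟨c0, hc0⟩ := colDiff_dvd_sub_rowCollapse a b 2 (x 0)
  obtain ⟨c1, hc1⟩ := colDiff_dvd_sub_rowCollapse a b 2 (x 1)
  have hx2 : colDiff a b 2 * (colDiff a b 0 * c0 + colDiff a b 1 * c1 + x 2) = 0 := by
    linear_combination hx - colDiff a b 0 * (hc0 + hβ0) - colDiff a b 1 * (hc1 + hβ1)
  have hx2' := (mul_eq_zero.mp hx2).resolve_left (colDiff_ne_zero hab 2)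
  refine ⟨β, c0, c1, funext fun i => ?_⟩
  fin_cases i <;>
    simp only [Fin.zero_eta, Fin.mk_one, Fin.reduceFinMk, skew3, dotProduct, mulVec, of_apply,
      cons_val', cons_val_zero, cons_val_one, cons_val, cons_val_fin_one, Fin.sum_univ_three]
  · linear_combination hc0 + hβ0
  · linear_combination hc1 + hβ1
  · linear_combination hx2'

end RowCollapse

section ThreePoints

variable {R : Type*} [CommRing R]

local notation "P" => MvPolynomial (Fin 3 × Fin 3) R

noncomputable def triple (i j l : Fin 3) : P := colDiff 0 1 i * colDiff 0 2 j * colDiff 1 2 l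

theorem isAlternating_minor (i j : Fin 3) :
    IsAlternating (colDiff 0 1 i * colDiff 0 2 j - colDiff 0 1 j * colDiff 0 2 i : P) := by
  refine IsAlternating.of_rename_swap fun s => ?_
  fin_cases s <;> simp only [Fin.zero_eta, Fin.mk_one, Fin.castSucc_zero, Fin.succ_zero_eq_one,
    Fin.castSucc_one, Fin.succ_one_eq_two, Equiv.swap_apply_def, colDiff, map_sub, map_mul,
    rename_X, Fin.reduceEq, reduceIte] <;> ring

theorem isAlternating_symmetrized_triple (i j l : Fin 3) :
    IsAlternating (triple i j l + triple i l j + triple j i l + triple j l i + triple l i j +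
      triple l j i : P) := by
  refine IsAlternating.of_rename_swap fun s => ?_
  fin_cases s <;> simp only [Fin.zero_eta, Fin.mk_one, Fin.castSucc_zero, Fin.succ_zero_eq_one,
    Fin.castSucc_one, Fin.succ_one_eq_two, Equiv.swap_apply_def, triple, colDiff, map_add,
    map_sub, map_mul, rename_X, Fin.reduceEq, reduceIte] <;> ring

theorem span_minors_le_alternatingIdeal :
    Ideal.span (Set.range fun p : Fin 3 × Fin 3 =>
      (colDiff 0 1 p.1 * colDiff 0 2 p.2 - colDiff 0 1 p.2 * colDiff 0 2 p.1 : P)) ≤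
      alternatingIdeal :=
  Ideal.span_le.mpr <| Set.range_subset_iff.mpr fun p =>
    Ideal.subset_span (isAlternating_minor p.1 p.2)

theorem span_triples_le_alternatingIdeal (h6 : IsUnit (6 : R)) :
    Ideal.span (Set.range fun p : Fin 3 × Fin 3 × Fin 3 =>
      (colDiff 0 1 p.1 * colDiff 0 2 p.2.1 * colDiff 1 2 p.2.2 : P)) ≤ alternatingIdeal := by
  refine Ideal.span_le.mpr <| Set.range_subset_iff.mpr fun ⟨i, j, l⟩ => ?_
  have hminor : ∀ i j, (colDiff 0 1 i * colDiff 0 2 j - colDiff 0 1 j * colDiff 0 2 i : P) ∈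
      alternatingIdeal :=
    fun i j => span_minors_le_alternatingIdeal (Ideal.subset_span ⟨(i, j), rfl⟩)
  have hsix : (C 6 : P) * triple i j l =
      (triple i j l + triple i l j + triple j i l + triple j l i + triple l i j + triple l j i) +
        colDiff 0 1 i * (colDiff 0 1 j * colDiff 0 2 l - colDiff 0 1 l * colDiff 0 2 j) +
        (2 * colDiff 1 2 l - colDiff 0 1 l) *
          (colDiff 0 1 i * colDiff 0 2 j - colDiff 0 1 j * colDiff 0 2 i) +
        (colDiff 0 1 j + 2 * colDiff 0 2 j) *
          (colDiff 0 1 i * colDiff 0 2 l - colDiff 0 1 l * colDiff 0 2 i) := by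
    simp only [triple, colDiff, map_ofNat]; ring
  change triple i j l ∈ alternatingIdeal
  rw [← Ideal.unit_mul_mem_iff_mem _ (h6.map C), hsix]
  refine Ideal.add_mem _ (Ideal.add_mem _ (Ideal.add_mem _ ?_ ?_) ?_) ?_
  · exact Ideal.subset_span (isAlternating_symmetrized_triple i j l)
  all_goals exact Ideal.mul_mem_left _ _ (hminor _ _)

theorem mem_alternatingIdeal_of_collapse_eq_zero [IsDomain R] (h6 : IsUnit (6 : R)) {f : P}
    (h01 : collapse 0 1 f = 0) (h02 : collapse 0 2 f = 0) (h12 : collapse 1 2 f = 0) :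
    f ∈ alternatingIdeal := by
  obtain ⟨a, rfl⟩ : ∃ a, colDiff 0 1 ⬝ᵥ a = f := by
    have hf := sub_collapse_mem_span 0 1 f
    rw [h01, sub_zero] at hf
    obtain ⟨a, ha⟩ := Ideal.mem_span_range_iff_exists_fun.mp hf
    exact ⟨a, by rw [← ha, dotProduct_comm]; rfl⟩
  obtain ⟨g, hg⟩ := exists_eq_mulVec_of_forall_mem_span fun i =>
    sub_collapse_mem_span (0 : Fin 3) 2 (a i)
  rw [dotProduct_eq_dotProduct_sub_map (collapse 0 2)
    (fun i => collapse_colDiff_of_ne (by decide) (by decide) i) h02, hg] at h12 ⊢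
  set c := g.map (collapse 1 2)
  have hc : colDiff 0 1 ⬝ᵥ (c *ᵥ colDiff 0 1) = 0 := by
    rw [← h12]
    simp only [dotProduct, mulVec, map_sum, map_mul, c, Matrix.map_apply,
      collapse_colDiff_of_ne (a := (1 : Fin 3)) (by decide : (0 : Fin 3) ≠ 2)
        (by decide : (1 : Fin 3) ≠ 2),
      collapse_colDiff_right (a := (1 : Fin 3)) (by decide : (0 : Fin 3) ≠ 2)]
  rw [← add_sub_cancel c g, add_mulVec, dotProduct_add]
  refine Ideal.add_mem _ (span_minors_le_alternatingIdeal ?_)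
    (span_triples_le_alternatingIdeal h6 ?_)
  · exact (hasKoszulSyzygies_colDiff (by decide)).dotProduct_mulVec_mem_span hc _
  · refine dotProduct_mulVec_mem_span_triples _ _ _ fun i j => ?_
    exact sub_collapse_mem_span 1 2 (g i j)

end ThreePoints

end AlternatingDiagonal

open AlternatingDiagonal

/-- For `n = d = 3` (a `3 × 3` matrix of variables, with `S_3` permuting
the three columns), the ideal `J_3` generated by the alternating polynomials equals the
vanishing ideal `I(Δ_3)` of the big diagonal (the locus where two distinct columns
coincide). -/
theorem alternating_ideal_eq_diagonal_ideal_three_points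
    {k : Type*} [Field k] [CharZero k] (f : MvPolynomial (Fin 3 × Fin 3) k) :
    f ∈ Ideal.span {g : MvPolynomial (Fin 3 × Fin 3) k |
        ∀ σ : Equiv.Perm (Fin 3),
          rename (fun p : Fin 3 × Fin 3 => (p.1, σ p.2)) g = (Equiv.Perm.sign σ : ℤ) • g} ↔
      ∀ p : Fin 3 × Fin 3 → k,
        (∃ j j' : Fin 3, j ≠ j' ∧ ∀ i : Fin 3, p (i, j) = p (i, j')) → eval p f = 0 := by
  change f ∈ alternatingIdeal ↔ _
  refine ⟨fun hf p ⟨j, j', hjj', hp⟩ => eval_eq_zero_of_mem_alternatingIdeal hf hjj' hp,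
    fun hf => ?_⟩
  have hcollapse : ∀ a b : Fin 3, a ≠ b → collapse a b f = 0 := fun a b hab =>
    collapse_eq_zero_of_forall_eval fun p hp => hf p ⟨a, b, hab, hp⟩
  exact mem_alternatingIdeal_of_collapse_eq_zero (by norm_num : (6 : k) ≠ 0).isUnit
    (hcollapse 0 1 (by decide)) (hcollapse 0 2 (by decide)) (hcollapse 1 2 (by decide))
end

section
/- The homogeneous ideal of the second Veronese embedding of P^n (over a field of characteristic 0, or characteristic ≠ 2,3) is generated by quadrics of rank 3. -/
/-!
Two monomials in the `z_{ij}` with the same image `∏ x_i x_j` are connected by exchanges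
`z_{ac} z_{bd} ⇝ z_{ab} z_{cd}`, so the kernel is spanned by the binomials
`z_{ab} z_{cd} - z_{ac} z_{bd}`, the 2 × 2 minors of the symmetric matrix `(z_{ij})`.
For vectors `u, v` put `z_{uv} = ∑ u_i v_j z_{ij}`; the quadric `z_{uu} z_{vv} - z_{uv}²` lies in
the kernel, and `6 (z_{ab} z_{cd} - z_{ac} z_{bd})` is a difference of two second polarizations
of it, hence a combination of such quadrics. Each of them vanishes when `u, v` are dependent and otherwise has
rank exactly `3`: it is `¼(z_{uu} + z_{vv})² - ¼(z_{uu} - z_{vv})² - z_{uv}²`, while its polar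
form has an invertible Gram matrix at three suitable symmetric tensors, which is impossible for a
combination of two squares of linear forms.
-/

open MvPolynomial

namespace Stmt13

variable {k : Type*} [Field k]

/-- A quadric has rank at most `m` if it is a linear combination of `m` squares of linear
forms (over a field of characteristic `≠ 2` this agrees with the rank of the Gram
matrix). -/
def RankLE {ι : Type*} (m : ℕ) (q : MvPolynomial ι k) : Prop :=
  ∃ (c : Fin m → k) (l : Fin m → MvPolynomial ι k),
    (∀ i, (l i).IsHomogeneous 1) ∧ q = ∑ i, c i • (l i) ^ 2

/-- A quadric of rank exactly `3`. -/
def RankThree {ι : Type*} (q : MvPolynomial ι k) : Prop :=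
  RankLE 3 q ∧ ¬ RankLE 2 q

/-- The second Veronese map on coordinate rings: the algebra map sending the variable
`z_{ij}` (indexed by the unordered pair `{i,j}`) to `x_i x_j`. -/
noncomputable def veronese (n : ℕ) :
    MvPolynomial (Sym2 (Fin (n + 1))) k →+* MvPolynomial (Fin (n + 1)) k :=
  (aeval (fun s : Sym2 (Fin (n + 1)) =>
    Sym2.lift ⟨fun i j => X i * X j, fun i j => mul_comm _ _⟩ s)).toRingHom

open scoped Matrix

section Straightening

variable {R : Type*} [CommRing R] {ι : Type*}

variable (R ι) in
noncomputable def veroneseMap : MvPolynomial (Sym2 ι) R →ₐ[R] MvPolynomial ι R :=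
  aeval fun s => Sym2.lift ⟨fun i j => X i * X j, fun _ _ => mul_comm _ _⟩ s

@[simp]
lemma veroneseMap_X (i j : ι) : veroneseMap R ι (X s(i, j)) = X i * X j := by
  simp [veroneseMap]

def flatten (P : Multiset (Sym2 ι)) : Multiset ι :=
  P.bind Sym2.toMultiset

@[simp]
lemma flatten_zero : flatten (0 : Multiset (Sym2 ι)) = 0 :=
  Multiset.zero_bind _

@[simp]
lemma flatten_cons (i j : ι) (P : Multiset (Sym2 ι)) :
    flatten (s(i, j) ::ₘ P) = i ::ₘ j ::ₘ flatten P := by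
  simp [flatten, Sym2.toMultiset, ← Multiset.cons_coe, Multiset.cons_add, Multiset.singleton_add]

lemma eq_zero_of_flatten_eq_zero {P : Multiset (Sym2 ι)} (h : flatten P = 0) : P = 0 := by
  rcases Multiset.empty_or_exists_mem P with rfl | ⟨z, hz⟩
  · rfl
  induction z using Sym2.ind
  obtain ⟨P', rfl⟩ := Multiset.exists_cons_of_mem hz
  simp at h

lemma exists_eq_cons_of_mem_flatten {a : ι} {P : Multiset (Sym2 ι)} (h : a ∈ flatten P) :
    ∃ b P', P = s(a, b) ::ₘ P' := by
  obtain ⟨z, hz, haz⟩ := Multiset.mem_bind.1 h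
  obtain ⟨b, rfl⟩ := Sym2.mem_iff_exists.1 (Sym2.mem_toMultiset.1 haz)
  exact ⟨b, Multiset.exists_cons_of_mem hz⟩

lemma monomial_toFinsupp_cons {σ : Type*} [DecidableEq σ] (a : σ) (P : Multiset σ) (r : R) :
    monomial (Multiset.toFinsupp (a ::ₘ P)) r = X a * monomial (Multiset.toFinsupp P) r := by
  rw [← Multiset.singleton_add, Multiset.toFinsupp_add, Multiset.toFinsupp_singleton,
    monomial_single_add, pow_one]

lemma veroneseMap_monomial [DecidableEq ι] (P : Multiset (Sym2 ι)) (r : R) :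
    veroneseMap R ι (monomial (Multiset.toFinsupp P) r) =
      monomial (Multiset.toFinsupp (flatten P)) r := by
  induction P using Multiset.induction with
  | empty => simp [veroneseMap]
  | cons z P ih =>
    induction z using Sym2.ind
    simp [monomial_toFinsupp_cons, ih, mul_assoc]

variable (R ι) in
def symmetricMinors : Set (MvPolynomial (Sym2 ι) R) :=
  {p | ∃ a b c d : ι, p = X s(a, b) * X s(c, d) - X s(a, c) * X s(b, d)}

lemma exists_exchange [DecidableEq ι] {P : Multiset (Sym2 ι)} {a b : ι} {F : Multiset ι}
    (h : flatten P = a ::ₘ b ::ₘ F) (r : R) :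
    ∃ P', flatten P' = F ∧ monomial (Multiset.toFinsupp P) r -
      X s(a, b) * monomial (Multiset.toFinsupp P') r ∈ Ideal.span (symmetricMinors R ι) := by
  obtain ⟨c, P₁, rfl⟩ := exists_eq_cons_of_mem_flatten (h ▸ Multiset.mem_cons_self a _)
  rw [flatten_cons, Multiset.cons_inj_right] at h
  by_cases hcb : c = b
  · subst hcb
    exact ⟨P₁, (Multiset.cons_inj_right _).1 h, by simp [monomial_toFinsupp_cons]⟩
  have hb : b ∈ flatten P₁ :=
    (Multiset.mem_cons.1 (h ▸ Multiset.mem_cons_self b F)).resolve_left (Ne.symm hcb)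
  obtain ⟨d, P₂, rfl⟩ := exists_eq_cons_of_mem_flatten hb
  rw [flatten_cons, Multiset.cons_swap, Multiset.cons_inj_right] at h
  refine ⟨s(c, d) ::ₘ P₂, by rw [flatten_cons, h], ?_⟩
  -- replacing the pairs `{a, c}, {b, d}` by `{a, b}, {c, d}` costs one minor
  have hminor : X s(a, c) * X s(b, d) - X s(a, b) * X s(c, d) ∈ symmetricMinors R ι :=
    ⟨a, c, b, d, rfl⟩
  convert Ideal.mul_mem_right (monomial (Multiset.toFinsupp P₂) r) _
    (Ideal.subset_span hminor) using 1
  simp only [monomial_toFinsupp_cons]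
  ring

lemma monomial_sub_monomial_mem_span_symmetricMinors [DecidableEq ι]
    {P Q : Multiset (Sym2 ι)} (h : flatten P = flatten Q) (r : R) :
    monomial (Multiset.toFinsupp P) r - monomial (Multiset.toFinsupp Q) r ∈
      Ideal.span (symmetricMinors R ι) := by
  induction Q using Multiset.induction generalizing P with
  | empty => simp [eq_zero_of_flatten_eq_zero (h.trans flatten_zero)]
  | cons z Q ih =>
    induction z using Sym2.ind with
    | _ a b =>
      rw [flatten_cons] at h
      obtain ⟨P', hP', hexchange⟩ := exists_exchange h r
      convert add_mem hexchange (Ideal.mul_mem_left _ (X s(a, b)) (ih hP')) using 1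
      rw [monomial_toFinsupp_cons]
      ring

/-- Sends `x^e` to `z^P` for some `P` with `flatten P = e` (to junk if there is none). -/
noncomputable def veroneseSection [DecidableEq ι] :
    MvPolynomial ι R → MvPolynomial (Sym2 ι) R :=
  AddMonoidAlgebra.mapDomain fun e =>
    Multiset.toFinsupp (Function.invFun flatten (Finsupp.toMultiset e))

lemma sub_veroneseSection_mem_span_symmetricMinors [DecidableEq ι]
    (p : MvPolynomial (Sym2 ι) R) :
    p - veroneseSection (veroneseMap R ι p) ∈ Ideal.span (symmetricMinors R ι) := by
  induction p using MvPolynomial.induction_on' with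
  | monomial m r =>
    obtain ⟨P, rfl⟩ := Multiset.toFinsupp.surjective m
    rw [veroneseMap_monomial, veroneseSection,
      ← single_eq_monomial (Multiset.toFinsupp (flatten P)), AddMonoidAlgebra.mapDomain_single,
      single_eq_monomial, Multiset.toFinsupp_toMultiset]
    exact monomial_sub_monomial_mem_span_symmetricMinors (Function.invFun_eq ⟨P, rfl⟩).symm r
  | add p q hp hq =>
    rw [map_add, veroneseSection, AddMonoidAlgebra.mapDomain_add, add_sub_add_comm]
    exact add_mem hp hq

lemma ker_veroneseMap_le_span_symmetricMinors :
    RingHom.ker (veroneseMap R ι) ≤ Ideal.span (symmetricMinors R ι) := by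
  classical
  intro p hp
  simpa [RingHom.mem_ker.1 hp, veroneseSection, AddMonoidAlgebra.mapDomain_zero]
    using sub_veroneseSection_mem_span_symmetricMinors p

end Straightening

section LineConics

variable {R : Type*} [CommRing R] {ι : Type*} [Fintype ι]

noncomputable def pairForm (u v : ι → R) : MvPolynomial (Sym2 ι) R :=
  ∑ i, ∑ j, C (u i * v j) * X s(i, j)

lemma pairForm_comm (u v : ι → R) : pairForm u v = pairForm v u := by
  rw [pairForm, Finset.sum_comm]
  simp_rw [mul_comm (u _), Sym2.eq_swap]
  rfl

lemma pairForm_add_left (u u' v : ι → R) :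
    pairForm (u + u') v = pairForm u v + pairForm u' v := by
  simp [pairForm, add_mul, Finset.sum_add_distrib]

lemma pairForm_add_right (u v v' : ι → R) :
    pairForm u (v + v') = pairForm u v + pairForm u v' := by
  rw [pairForm_comm, pairForm_add_left, pairForm_comm v, pairForm_comm v']

lemma pairForm_smul_left (a : R) (u v : ι → R) : pairForm (a • u) v = C a * pairForm u v := by
  simp [pairForm, Finset.mul_sum, mul_assoc]

lemma pairForm_smul_right (a : R) (u v : ι → R) : pairForm u (a • v) = C a * pairForm u v := by
  rw [pairForm_comm, pairForm_smul_left, pairForm_comm]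

lemma pairForm_single [DecidableEq ι] (a b : ι) :
    pairForm (Pi.single a 1) (Pi.single b 1) = (X s(a, b) : MvPolynomial (Sym2 ι) R) := by
  simp [pairForm, Pi.single_apply, apply_ite C, ite_mul]

lemma isHomogeneous_pairForm (u v : ι → R) : (pairForm u v).IsHomogeneous 1 :=
  .sum _ _ _ fun _ _ => .sum _ _ _ fun _ _ => (isHomogeneous_X R _).C_mul _

lemma veroneseMap_pairForm (u v : ι → R) :
    veroneseMap R ι (pairForm u v) = (∑ i, C (u i) * X i) * (∑ j, C (v j) * X j) := by
  simp [pairForm, Finset.sum_mul_sum, veroneseMap, mul_mul_mul_comm]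

noncomputable def lineConic (u v : ι → R) : MvPolynomial (Sym2 ι) R :=
  pairForm u u * pairForm v v - pairForm u v ^ 2

lemma isHomogeneous_lineConic (u v : ι → R) : (lineConic u v).IsHomogeneous 2 :=
  ((isHomogeneous_pairForm u u).mul (isHomogeneous_pairForm v v)).sub
    ((isHomogeneous_pairForm u v).pow 2)

lemma lineConic_mem_ker_veroneseMap (u v : ι → R) :
    lineConic u v ∈ RingHom.ker (veroneseMap R ι) := by
  rw [RingHom.mem_ker, lineConic, map_sub, map_mul, map_pow, veroneseMap_pairForm,
    veroneseMap_pairForm, veroneseMap_pairForm]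
  ring

lemma lineConic_comm (u v : ι → R) : lineConic u v = lineConic v u := by
  rw [lineConic, lineConic, pairForm_comm u v, mul_comm]

lemma lineConic_smul_self (a : R) (u : ι → R) : lineConic u (a • u) = 0 := by
  simp only [lineConic, pairForm_smul_left, pairForm_smul_right]
  ring

lemma polarization_mem {J : Ideal (MvPolynomial (Sym2 ι) R)} (hJ : ∀ u v, lineConic u v ∈ J)
    (u u' v v' : ι → R) :
    2 * (2 * pairForm u u' * pairForm v v' - pairForm u v * pairForm u' v' -
      pairForm u v' * pairForm u' v) ∈ J := by
  have hpolar : lineConic (u + u') (v + v') - lineConic (u + u') v - lineConic (u + u') v'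
      - lineConic u (v + v') + lineConic u v + lineConic u v'
      - lineConic u' (v + v') + lineConic u' v + lineConic u' v' ∈ J := by
    repeat' with_reducible first | exact hJ _ _ | refine J.add_mem ?_ ?_ | refine J.sub_mem ?_ ?_
  convert hpolar using 1
  simp only [lineConic, pairForm_add_left, pairForm_add_right]
  rw [pairForm_comm u' u, pairForm_comm v' v]
  ring

lemma symmetricMinors_subset_of_lineConic_mem {J : Ideal (MvPolynomial (Sym2 ι) k)}
    (h2 : (2 : k) ≠ 0) (h3 : (3 : k) ≠ 0) (hJ : ∀ u v, lineConic u v ∈ J) :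
    symmetricMinors k ι ⊆ J := by
  classical
  rintro _ ⟨a, b, c, d, rfl⟩
  have h6 : IsUnit (6 : MvPolynomial (Sym2 ι) k) := by
    have h6' : (6 : k) ≠ 0 := by
      rw [show (6 : k) = 2 * 3 by norm_num]
      exact mul_ne_zero h2 h3
    rw [← map_ofNat C 6]
    exact (IsUnit.mk0 _ h6').map C
  let e : ι → ι → k := fun i => Pi.single i 1
  refine (J.unit_mul_mem_iff_mem h6).1 ?_
  convert J.sub_mem (polarization_mem hJ (e a) (e b) (e c) (e d))
    (polarization_mem hJ (e a) (e c) (e b) (e d)) using 1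
  simp only [e, pairForm_single, Sym2.eq_swap (a := c) (b := b)]
  ring

end LineConics

lemma _root_.MvPolynomial.IsHomogeneous.eval_add {R σ : Type*} [CommSemiring R]
    {l : MvPolynomial σ R} (hl : l.IsHomogeneous 1) (y z : σ → R) :
    eval (y + z) l = eval y l + eval z l := by
  classical
  simp only [eval_eq, ← Finset.sum_add_distrib, ← mul_add]
  refine Finset.sum_congr rfl fun d hd => ?_
  have hcard : Multiset.card (Finsupp.toMultiset d) = 1 := by
    have hdeg : (d.sum fun _ c => c) = 1 := by
      simpa [Finsupp.weight_apply] using hl (mem_support_iff.1 hd)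
    rw [Finsupp.card_toMultiset]
    exact hdeg
  obtain ⟨s, hs⟩ := Multiset.card_eq_one.1 hcard
  obtain rfl : d = Finsupp.single s 1 := by
    rw [← Multiset.toFinsupp_singleton, eq_comm, Multiset.toFinsupp_eq_iff, hs]
  simp

noncomputable def polarGram {R σ ι : Type*} [CommRing R] (q : MvPolynomial σ R)
    (y : ι → σ → R) : Matrix ι ι R :=
  Matrix.of fun a b => eval (y a + y b) q - eval (y a) q - eval (y b) q

lemma RankLE.rank_polarGram_le {σ ι : Type*} [Fintype ι] {m : ℕ} {q : MvPolynomial σ k}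
    (h : RankLE m q) (y : ι → σ → k) : (polarGram q y).rank ≤ m := by
  obtain ⟨c, l, hl, rfl⟩ := h
  let P : Matrix (Fin m) ι k := Matrix.of fun i a => eval (y a) (l i)
  have hP : polarGram (∑ i, c i • l i ^ 2) y = Pᵀ * (Matrix.diagonal (2 • c) * P) := by
    ext a b
    rw [Matrix.mul_apply]
    simp only [polarGram, P, Matrix.of_apply, Matrix.diagonal_mul, Matrix.transpose_apply,
      map_sum, smul_eval, map_pow, (hl _).eval_add, ← Finset.sum_sub_distrib, Pi.smul_apply]
    exact Finset.sum_congr rfl fun i _ => by ring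
  calc (polarGram (∑ i, c i • l i ^ 2) y).rank
      ≤ P.rank := hP ▸ (Matrix.rank_mul_le_right _ _).trans (Matrix.rank_mul_le_right _ _)
    _ ≤ m := (Matrix.rank_le_card_height P).trans_eq (Fintype.card_fin m)

lemma four_ne_zero_of_two_ne_zero (h2 : (2 : k) ≠ 0) : (4 : k) ≠ 0 := by
  rw [show (4 : k) = 2 * 2 by norm_num]
  exact mul_ne_zero h2 h2

section RankThree

variable {ι : Type*} [Fintype ι]

def symTensor {R : Type*} [CommRing R] (w w' : ι → R) : Sym2 ι → R :=
  Sym2.lift ⟨fun i j => w i * w' j + w j * w' i, fun _ _ => add_comm _ _⟩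

lemma eval_symTensor_pairForm {R : Type*} [CommRing R] (u v w w' : ι → R) :
    eval (symTensor w w') (pairForm u v) = (u ⬝ᵥ w) * (v ⬝ᵥ w') + (u ⬝ᵥ w') * (v ⬝ᵥ w) := by
  simp only [pairForm, symTensor, dotProduct, Finset.sum_mul_sum, ← Finset.sum_add_distrib,
    map_sum, map_mul, eval_C, eval_X, Sym2.lift_mk]
  exact Finset.sum_congr rfl fun i _ => Finset.sum_congr rfl fun j _ => by ring

lemma _root_.LinearIndependent.exists_dual_pair {u v : ι → k} (h : LinearIndependent k ![u, v]) :
    ∃ w w' : ι → k, u ⬝ᵥ w = 1 ∧ v ⬝ᵥ w = 0 ∧ u ⬝ᵥ w' = 0 ∧ v ⬝ᵥ w' = 1 := by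
  let A : Matrix (Fin 2) ι k := Matrix.of ![u, v]
  have hrange : LinearMap.range A.mulVecLin = ⊤ :=
    Submodule.eq_top_of_finrank_eq (by rw [← Matrix.rank, h.rank_matrix (M := A)]; simp)
  obtain ⟨B, hB⟩ := Matrix.mulVec_surjective_iff_exists_right_inverse.1
    (LinearMap.range_eq_top.1 hrange)
  have hAB (a b : Fin 2) : A a ⬝ᵥ (fun i => B i b) = (1 : Matrix (Fin 2) (Fin 2) k) a b :=
    congrFun₂ hB a b
  exact ⟨fun i => B i 0, fun i => B i 1, hAB 0 0, hAB 1 0, hAB 0 1, hAB 1 1⟩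

lemma rankLE_three_lineConic (h2 : (2 : k) ≠ 0) (u v : ι → k) : RankLE 3 (lineConic u v) := by
  refine ⟨![4⁻¹, -4⁻¹, -1], ![pairForm u u + pairForm v v, pairForm u u - pairForm v v,
    pairForm u v], fun i => ?_, ?_⟩
  · fin_cases i
    · exact (isHomogeneous_pairForm u u).add (isHomogeneous_pairForm v v)
    · exact (isHomogeneous_pairForm u u).sub (isHomogeneous_pairForm v v)
    · exact isHomogeneous_pairForm u v
  have h4 : (C (4⁻¹ : k) : MvPolynomial (Sym2 ι) k) * 4 = 1 := by
    rw [← map_ofNat C 4, ← C_mul, inv_mul_cancel₀ (four_ne_zero_of_two_ne_zero h2), C_1]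
  simp only [lineConic, Fin.sum_univ_three, smul_eq_C_mul, Matrix.cons_val, map_neg, C_1]
  linear_combination (-(pairForm u u * pairForm v v)) * h4

lemma not_rankLE_two_lineConic (h2 : (2 : k) ≠ 0) {u v : ι → k}
    (h : LinearIndependent k ![u, v]) : ¬ RankLE 2 (lineConic u v) := by
  obtain ⟨w, w', huw, hvw, huw', hvw'⟩ := h.exists_dual_pair
  have hGram : polarGram (lineConic u v) ![symTensor w w, symTensor w' w', symTensor w w'] =
      !![0, 4, 0; 4, 0, 0; 0, 0, -2] := by
    ext a b
    fin_cases a <;> fin_cases b <;>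
      simp [polarGram, lineConic, (isHomogeneous_pairForm _ _).eval_add, eval_symTensor_pairForm,
        huw, hvw, huw', hvw'] <;> ring
  have hdet : IsUnit (!![0, 4, 0; 4, 0, 0; 0, 0, -2] : Matrix (Fin 3) (Fin 3) k).det := by
    simp [Matrix.det_fin_three, h2, four_ne_zero_of_two_ne_zero h2]
  intro hq
  have := hq.rank_polarGram_le ![symTensor w w, symTensor w' w', symTensor w w']
  rw [hGram, Matrix.rank_of_isUnit _ ((Matrix.isUnit_iff_isUnit_det _).2 hdet)] at this
  simp at this

lemma lineConic_mem_span_rankThree (h2 : (2 : k) ≠ 0) (u v : ι → k) :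
    lineConic u v ∈ Ideal.span {q : MvPolynomial (Sym2 ι) k |
      q.IsHomogeneous 2 ∧ q ∈ RingHom.ker (veroneseMap k ι) ∧ RankThree q} := by
  by_cases hu : u = 0
  · rw [hu, ← zero_smul k v, lineConic_comm, lineConic_smul_self]
    exact zero_mem _
  by_cases hv : ∃ a : k, a • u = v
  · obtain ⟨a, rfl⟩ := hv
    rw [lineConic_smul_self]
    exact zero_mem _
  have hI : LinearIndependent k ![u, v] := (LinearIndependent.pair_iff' hu).2 (not_exists.1 hv)
  exact Ideal.subset_span ⟨isHomogeneous_lineConic u v, lineConic_mem_ker_veroneseMap u v,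
    rankLE_three_lineConic h2 u v, not_rankLE_two_lineConic h2 hI⟩

theorem ker_veroneseMap_eq_span_rankThree (h2 : (2 : k) ≠ 0) (h3 : (3 : k) ≠ 0) :
    RingHom.ker (veroneseMap k ι) = Ideal.span {q : MvPolynomial (Sym2 ι) k |
      q.IsHomogeneous 2 ∧ q ∈ RingHom.ker (veroneseMap k ι) ∧ RankThree q} := by
  refine le_antisymm ?_ (Ideal.span_le.2 fun q hq => hq.2.1)
  exact ker_veroneseMap_le_span_symmetricMinors.trans <| Ideal.span_le.2 <|
    symmetricMinors_subset_of_lineConic_mem h2 h3 (lineConic_mem_span_rankThree h2)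

end RankThree

/-- Over a field of characteristic `≠ 2, 3` (in particular of
characteristic zero), the homogeneous ideal of the second Veronese embedding of `P^n`,
i.e. the kernel of the map `z_{ij} ↦ x_i x_j`, is generated by its quadrics of rank `3`. -/
theorem veronese_ideal_generated_by_rank_three_quadrics
    (n : ℕ) (h2 : (2 : k) ≠ 0) (h3 : (3 : k) ≠ 0) :
    RingHom.ker (veronese (k := k) n) =
      Ideal.span {q : MvPolynomial (Sym2 (Fin (n + 1))) k |
        q.IsHomogeneous 2 ∧ q ∈ RingHom.ker (veronese (k := k) n) ∧ RankThree q} :=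
  ker_veroneseMap_eq_span_rankThree h2 h3

end Stmt13
end

section
/- Let X be a projective scheme over an algebraically closed field, let A be a globally generated line bundle, B a very ample line bundle with L := A ⊗ B, and suppose that the space I(X,B)_2 of quadrics through X in P(H^0(B)) is spanned by quadrics of rank at most r. If the multiplication map S^2H^0(X,A) ⊗ I(X,B)_2 → I(X,L)_2 is surjective, then I(X,L)_2 is spanned by quadrics of rank at most r. -/
/-!
Multiplying a quadric `q` by a square `a ⊗ a` is the same as pushing `q` forward along the
linear map `b ↦ m (a ⊗ b)`, and pushforwards preserve being a sum of at most `r` squares.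
So every generator `(a ⊗ a) · q` of `IL` lies in the span of rank `≤ r` quadrics as soon as
`q` does, and these span `IB`.
-/

open TensorProduct

namespace Stmt16

variable {k : Type*} [Field k]

/-- A symmetric `2`-tensor (a quadric) has rank at most `r` if it is a linear combination
of `r` squares `w ⊗ w`; over a field of characteristic `≠ 2` this is the Gram rank. -/
def RankLE {W : Type*} [AddCommGroup W] [Module k W] (r : ℕ) (q : W ⊗[k] W) : Prop :=
  ∃ (c : Fin r → k) (w : Fin r → W), q = ∑ i, c i • (w i ⊗ₜ[k] w i)

section

variable {W V : Type*} [AddCommGroup W] [Module k W] [AddCommGroup V] [Module k V]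

theorem RankLE.map_map {r : ℕ} {q : W ⊗[k] W} (hq : RankLE r q) (f : W →ₗ[k] V) :
    RankLE r (TensorProduct.map f f q) := by
  obtain ⟨c, w, rfl⟩ := hq
  exact ⟨c, fun i => f (w i), by simp only [map_sum, map_smul, map_tmul]⟩

theorem map_map_le_span_rankLE {r : ℕ} {I : Submodule k (W ⊗[k] W)}
    {J : Submodule k (V ⊗[k] V)} (f : W →ₗ[k] V) (hIJ : I.map (TensorProduct.map f f) ≤ J)
    (hI : I ≤ Submodule.span k {q | q ∈ I ∧ RankLE r q}) :
    I.map (TensorProduct.map f f) ≤ Submodule.span k {q | q ∈ J ∧ RankLE r q} := by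
  refine (Submodule.map_mono hI).trans ?_
  rw [Submodule.map_span]
  refine Submodule.span_mono ?_
  rintro _ ⟨q, ⟨hqI, hq⟩, rfl⟩
  exact ⟨hIJ (Submodule.mem_map_of_mem hqI), hq.map_map f⟩

end

theorem map_tensorTensorTensorComm_tmul_self {WA WB WL : Type*}
    [AddCommGroup WA] [Module k WA] [AddCommGroup WB] [Module k WB]
    [AddCommGroup WL] [Module k WL] (m : WA ⊗[k] WB →ₗ[k] WL) (a : WA) (q : WB ⊗[k] WB) :
    TensorProduct.map m m (tensorTensorTensorComm k WA WA WB WB ((a ⊗ₜ a) ⊗ₜ q)) =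
      TensorProduct.map (m ∘ₗ mk k WA WB a) (m ∘ₗ mk k WA WB a) q := by
  induction q using TensorProduct.induction_on with
  | zero => simp
  | tmul b b' => rfl
  | add x y hx hy => simp only [tmul_add, map_add, hx, hy]

theorem quadrics_of_rank_le_span_general
    {WA WB WL : Type*}
    [AddCommGroup WA] [Module k WA] [AddCommGroup WB] [Module k WB]
    [AddCommGroup WL] [Module k WL]
    (m : WA ⊗[k] WB →ₗ[k] WL)
    (IB : Submodule k (WB ⊗[k] WB)) (IL : Submodule k (WL ⊗[k] WL)) (r : ℕ)
    (hIB : IB ≤ Submodule.span k {q : WB ⊗[k] WB | q ∈ IB ∧ RankLE r q})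
    (hsurj : Submodule.map
        ((TensorProduct.map m m).comp
          (TensorProduct.tensorTensorTensorComm k WA WA WB WB).toLinearMap)
        (Submodule.span k {x : (WA ⊗[k] WA) ⊗[k] (WB ⊗[k] WB) |
          ∃ (a : WA) (q : WB ⊗[k] WB), q ∈ IB ∧ x = (a ⊗ₜ[k] a) ⊗ₜ[k] q}) = IL) :
    IL ≤ Submodule.span k {q : WL ⊗[k] WL | q ∈ IL ∧ RankLE r q} := by
  refine hsurj.symm.le.trans ?_
  rw [Submodule.map_span, Submodule.span_le]
  rintro _ ⟨_, ⟨a, q, hq, rfl⟩, rfl⟩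
  set g := m ∘ₗ mk k WA WB a
  have hIL : IB.map (TensorProduct.map g g) ≤ IL := Submodule.map_le_iff_le_comap.mpr
    fun q' hq' => by
      rw [Submodule.mem_comap, ← hsurj, ← map_tensorTensorTensorComm_tmul_self]
      exact Submodule.mem_map_of_mem (Submodule.subset_span ⟨a, q', hq', rfl⟩)
  rw [LinearMap.comp_apply, LinearEquiv.coe_coe, map_tensorTensorTensorComm_tmul_self]
  exact map_map_le_span_rankLE g hIL hIB (Submodule.mem_map_of_mem hq)

/-- (Abstract form of Lemma 7.5.)  Let `X ⊆ P(H⁰(B))` be embedded by a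
very ample line bundle `B`, let `A` be globally generated and `L = A ⊗ B`.  Writing
`WA = H⁰(A)`, `WB = H⁰(B)`, `WL = H⁰(L)` with multiplication `m : WA ⊗ WB → WL`, let
`IB ⊆ S²WB` and `IL ⊆ S²WL` be the spaces of quadrics through `X` in the two embeddings,
and let `Φ : (WA ⊗ WA) ⊗ (WB ⊗ WB) → WL ⊗ WL` be the induced multiplication of quadrics.
If `IB` is spanned by its quadrics of rank at most `r` and the multiplication map
`S²WA ⊗ IB → IL` is surjective (i.e. `Φ` maps the span of the tensors `(a ⊗ a) ⊗ q`,
`q ∈ IB`, onto `IL`), then `IL` is spanned by its quadrics of rank at most `r`. -/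
theorem quadrics_of_rank_le_span
    (h2 : (2 : k) ≠ 0)
    {WA WB WL : Type*}
    [AddCommGroup WA] [Module k WA] [AddCommGroup WB] [Module k WB]
    [AddCommGroup WL] [Module k WL]
    (m : WA ⊗[k] WB →ₗ[k] WL)
    (IB : Submodule k (WB ⊗[k] WB)) (IL : Submodule k (WL ⊗[k] WL)) (r : ℕ)
    (hIB : IB ≤ Submodule.span k {q : WB ⊗[k] WB | q ∈ IB ∧ RankLE r q})
    (hsurj : Submodule.map
        ((TensorProduct.map m m).comp
          (TensorProduct.tensorTensorTensorComm k WA WA WB WB).toLinearMap)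
        (Submodule.span k {x : (WA ⊗[k] WA) ⊗[k] (WB ⊗[k] WB) |
          ∃ (a : WA) (q : WB ⊗[k] WB), q ∈ IB ∧ x = (a ⊗ₜ[k] a) ⊗ₜ[k] q}) = IL) :
    IL ≤ Submodule.span k {q : WL ⊗[k] WL | q ∈ IL ∧ RankLE r q} :=
  quadrics_of_rank_le_span_general m IB IL r hIB hsurj

end Stmt16
end

section
/- Let C be a smooth projective curve of genus g over an algebraically closed field of characteristic zero, and let A, B be line bundles on C such that A is nonspecial (H^1 = 0) and (k+1)-very ample, and h^1(C, B ⊗ A^{−1}) ≤ h^0(C,A) − 1 − k − 2. Then h^1(C, B(−ξ)) = 0 for every ξ ∈ C^{[k+2]}; in particular B is nonspecial and (k+1)-very ample. -/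
namespace Stmt17

/-- An abstract model of the cohomological data of a smooth projective curve of genus `g`
over an algebraically closed field of characteristic zero: the Picard group `Pic`, the
dimensions `h⁰, h¹` of cohomology of line bundles, the degree homomorphism, the canonical
class `K`, and the predicate `Eff m ξ` saying that `ξ` is the class of an effective
divisor of degree `m`; together with the standard facts: Serre duality, Riemann–Roch,
monotonicity of `h⁰` under adding an effective divisor, the fact that a class with a
section is effective of its degree, and the degree of an effective class. -/
structure CurveModel where
  Pic : Type*
  [addCommGroup : AddCommGroup Pic]
  g : ℕ
  K : Pic
  deg : Pic →+ ℤ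
  h0 : Pic → ℕ
  h1 : Pic → ℕ
  Eff : ℕ → Pic → Prop
  serre : ∀ L : Pic, h1 L = h0 (K - L)
  riemannRoch : ∀ L : Pic, (h0 L : ℤ) - (h1 L : ℤ) = deg L + 1 - (g : ℤ)
  deg_eff : ∀ (m : ℕ) (ξ : Pic), Eff m ξ → deg ξ = (m : ℤ)
  h0_mono : ∀ (L : Pic) (m : ℕ) (ξ : Pic), Eff m ξ → h0 L ≤ h0 (L + ξ)
  eff_of_h0_pos : ∀ L : Pic, 0 < h0 L → ∃ m : ℕ, Eff m L
  eff_exists : ∀ m : ℕ, ∃ ξ : Pic, Eff m ξ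

attribute [instance] CurveModel.addCommGroup

/-- `L` is `m`-very ample: for every effective divisor `ξ` of degree `m + 1` the
evaluation map `H⁰(L) → H⁰(L ⊗ O_ξ)` is surjective, i.e.
`h⁰(L − ξ) = h⁰(L) − (m + 1)`. -/
def CurveModel.VeryAmple (Cm : CurveModel) (m : ℕ) (L : Cm.Pic) : Prop :=
  ∀ ξ : Cm.Pic, Cm.Eff (m + 1) ξ → (Cm.h0 (L - ξ) : ℤ) = (Cm.h0 L : ℤ) - (m + 1)

/-- Let `C` be a smooth projective curve of genus `g`, and let `A, B`
be line bundles on `C` with `A` nonspecial (`h¹(A) = 0`) and `(k+1)`-very ample, and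
`h¹(B ⊗ A⁻¹) ≤ h⁰(A) − 1 − (k + 2)`.  Then `B` is automatically nonspecial and
`(k+1)`-very ample: indeed, if some effective `ξ` of degree `k + 2` had
`h¹(B(−ξ)) ≠ 0`, then `h¹(B ⊗ A⁻¹) ≥ h⁰(A(−ξ)) = h⁰(A) − (k + 2)
> h⁰(A) − 1 − (k + 2)`, a contradiction. -/
theorem nonspecial_very_ample_of_bound
    (Cm : CurveModel) (kk : ℕ) (A B : Cm.Pic)
    (hA1 : Cm.h1 A = 0)
    (hAva : Cm.VeryAmple (kk + 1) A)
    (hineq : (Cm.h1 (B - A) : ℤ) ≤ (Cm.h0 A : ℤ) - 1 - (kk + 2)) :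
    Cm.h1 B = 0 ∧ Cm.VeryAmple (kk + 1) B := by
  have key : ∀ ξ : Cm.Pic, Cm.Eff (kk + 2) ξ → Cm.h1 (B - ξ) = 0 := by
    intro ξ hξ
    by_contra hne
    have hpos : 0 < Cm.h0 (Cm.K - (B - ξ)) := by
      have := Cm.serre (B - ξ); omega
    obtain ⟨m, hm⟩ := Cm.eff_of_h0_pos _ hpos
    have hmono := Cm.h0_mono (A - ξ) m _ hm
    have hAξ := hAva ξ hξ
    have heq : A - ξ + (Cm.K - (B - ξ)) = Cm.K - (B - A) := by abel
    rw [heq] at hmono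
    have h1BA : Cm.h1 (B - A) = Cm.h0 (Cm.K - (B - A)) := Cm.serre _
    push_cast at hAξ hineq
    omega
  obtain ⟨ξ0, hξ0⟩ := Cm.eff_exists (kk + 2)
  have hB1 : Cm.h1 B = 0 := by
    have hmono := Cm.h0_mono (Cm.K - B) _ _ hξ0
    have hk := key ξ0 hξ0
    rw [Cm.serre] at hk ⊢
    have heq : Cm.K - B + ξ0 = Cm.K - (B - ξ0) := by abel
    rw [heq] at hmono
    omega
  refine ⟨hB1, ?_⟩
  intro ξ hξ
  have hk := key ξ hξ
  have rr1 := Cm.riemannRoch (B - ξ)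
  have rr2 := Cm.riemannRoch B
  have hd : Cm.deg (B - ξ) = Cm.deg B - (kk + 2) := by
    rw [map_sub, Cm.deg_eff _ _ hξ]; push_cast; ring
  rw [hd] at rr1
  push_cast at rr1 rr2 ⊢
  omega

end Stmt17
end
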